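/- arXiv:math/0306401 — 3 statements merged into one kernel-verified Lean document; each statement's English description precedes it below -/
import Mathlib

section
/- Let n ≥ 3 and let s₁, …, s_n be closed line segments in ℝ². Then the set of transversal lines in ℝ² to s₁, …, s_n has at most n connected components: there exist transversals T₁, …, T_m with m ≤ n such that every transversal lies in the same connected component of transversals as some T_j. -/
open Set

noncomputable section

/-- The line in ℝ² through `a` with direction `v`. -/
def lineThrough2 (a v : ℝ × ℝ) : Set (ℝ × ℝ) :=
  {p | ∃ r : ℝ, p = a + r • v}

/-- `L` is a line in ℝ². -/
def IsLine2 (L : Set (ℝ × ℝ)) : Prop :=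
  ∃ a v : ℝ × ℝ, v ≠ 0 ∧ L = lineThrough2 a v

/-- `L` is a transversal to the family of sets `s` in ℝ²: a line meeting every `s i`. -/
def IsTransversal2 {n : ℕ} (s : Fin n → Set (ℝ × ℝ)) (L : Set (ℝ × ℝ)) : Prop :=
  IsLine2 L ∧ ∀ i, (L ∩ s i).Nonempty

/-- Two transversals `L₀`, `L₁` to the family `s` lie in the same connected component of
transversals: one can be moved continuously to the other while remaining a transversal. -/
def SameComp2 {n : ℕ} (s : Fin n → Set (ℝ × ℝ)) (L₀ L₁ : Set (ℝ × ℝ)) : Prop :=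
  ∃ a v : ℝ → ℝ × ℝ,
    ContinuousOn a (Icc 0 1) ∧ ContinuousOn v (Icc 0 1) ∧
    (∀ t ∈ Icc (0:ℝ) 1, v t ≠ 0) ∧
    (∀ t ∈ Icc (0:ℝ) 1, ∀ i, (lineThrough2 (a t) (v t) ∩ s i).Nonempty) ∧
    lineThrough2 (a 0) (v 0) = L₀ ∧ lineThrough2 (a 1) (v 1) = L₁

/-!
Parametrize a line by the angle `θ` of its direction and its offset `c` along the normal. For fixed
`θ` the transversals are the offsets in an interval `[lowOffset θ, highOffset θ]`. The critical
angles are the directions of the nondegenerate segments, one per segment in every half-turn;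
starting the half-turn window at one of them leaves fewer than `n` inside it, which cut the window
into at most `n` arcs. Between two critical angles, at distance less than `π`, the feasible angles
form an interval, since each constraint reads `offset θ d ≤ 0` and `θ ↦ offset θ d` is a sinusoid.
Turning the angle linearly while clamping the offset into the feasible interval then connects any
two transversals whose angles lie on the same arc.
-/

open Real

lemma forall_nonpos_or_forall_nonneg {f : ℝ → ℝ} {a b : ℝ} (hf : Continuous f)
    (h0 : ∀ t ∈ Ioo a b, f t ≠ 0) : (∀ t ∈ Icc a b, f t ≤ 0) ∨ ∀ t ∈ Icc a b, 0 ≤ f t := by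
  by_contra! ⟨⟨s, hs, hfs⟩, t, ht, hft⟩
  rcases lt_or_gt_of_ne (show s ≠ t by rintro rfl; linarith) with hst | hst
  · obtain ⟨z, hz, hfz⟩ := intermediate_value_Ioo' hst.le hf.continuousOn ⟨hft, hfs⟩
    exact h0 z ⟨hs.1.trans_lt hz.1, hz.2.trans_le ht.2⟩ hfz
  · obtain ⟨z, hz, hfz⟩ := intermediate_value_Ioo hst.le hf.continuousOn ⟨hft, hfs⟩
    exact h0 z ⟨ht.1.trans_lt hz.1, hz.2.trans_le hs.2⟩ hfz

lemma Finset.notMem_uIoo_of_card_filter_lt_eq {α : Type*} [LinearOrder α] {A : Finset α}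
    {θ ρ : α} (h : (A.filter (θ < ·)).card = (A.filter (ρ < ·)).card) {a : α} (ha : a ∈ A) :
    a ∉ uIoo θ ρ := by
  wlog hθρ : θ ≤ ρ generalizing θ ρ
  · rw [uIoo_comm]; exact this h.symm (le_of_not_ge hθρ)
  have hsub : A.filter (ρ < ·) ⊆ A.filter (θ < ·) :=
    Finset.monotone_filter_right _ fun _ _ h => hθρ.trans_lt h
  have heq := Finset.eq_of_subset_of_card_le hsub h.le
  rw [uIoo_of_le hθρ]
  rintro ⟨hθa, haρ⟩
  have : a ∈ A.filter (ρ < ·) := heq ▸ Finset.mem_filter.2 ⟨ha, hθa⟩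
  exact (Finset.mem_filter.1 this).2.not_gt haρ

lemma exists_fin_representatives {α : Type*} (P : α → Prop) (R : α → α → Prop) (k : ℕ)
    (f : α → ℕ) (hf : ∀ a, P a → f a < k) (hR : ∀ a b, P a → P b → f a = f b → R a b) :
    ∃ m ≤ k, ∃ T : Fin m → α, (∀ j, P (T j)) ∧ ∀ a, P a → ∃ j, R a (T j) := by
  classical
  let S := (Finset.range k).filter fun i => ∃ a, P a ∧ f a = i
  have hS : ∀ i : S, ∃ a, P a ∧ f a = i := fun i => (Finset.mem_filter.1 i.2).2
  choose g hgP hgf using hS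
  refine ⟨S.card, (Finset.card_filter_le _ _).trans (Finset.card_range k).le,
    fun j => g (S.equivFin.symm j), fun j => hgP _, fun a ha => ?_⟩
  have haS : f a ∈ S := Finset.mem_filter.2 ⟨Finset.mem_range.2 (hf a ha), a, ha, rfl⟩
  refine ⟨S.equivFin ⟨f a, haS⟩, ?_⟩
  dsimp only
  rw [Equiv.symm_apply_apply]
  exact hR a _ ha (hgP _) (hgf ⟨f a, haS⟩).symm

namespace SegmentTransversal

def dir (θ : ℝ) : ℝ × ℝ := (cos θ, sin θ)

def normal (θ : ℝ) : ℝ × ℝ := (-sin θ, cos θ)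

def offset (θ : ℝ) : ℝ × ℝ →ₗ[ℝ] ℝ :=
  cos θ • LinearMap.snd ℝ ℝ ℝ - sin θ • LinearMap.fst ℝ ℝ ℝ

def along (θ : ℝ) : ℝ × ℝ →ₗ[ℝ] ℝ :=
  cos θ • LinearMap.fst ℝ ℝ ℝ + sin θ • LinearMap.snd ℝ ℝ ℝ

def lineAt (θ c : ℝ) : Set (ℝ × ℝ) := lineThrough2 (c • normal θ) (dir θ)

@[simp] lemma offset_apply (θ : ℝ) (p : ℝ × ℝ) : offset θ p = cos θ * p.2 - sin θ * p.1 := rfl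

@[simp] lemma along_apply (θ : ℝ) (p : ℝ × ℝ) : along θ p = cos θ * p.1 + sin θ * p.2 := rfl

lemma dir_ne_zero (θ : ℝ) : dir θ ≠ 0 := by
  intro h
  have h1 : cos θ = 0 := congrArg Prod.fst h
  have h2 : sin θ = 0 := congrArg Prod.snd h
  simpa [h1, h2] using sin_sq_add_cos_sq θ

lemma isLine2_lineAt (θ c : ℝ) : IsLine2 (lineAt θ c) := ⟨_, _, dir_ne_zero θ, rfl⟩

lemma offset_normal (θ : ℝ) : offset θ (normal θ) = 1 := by
  simp [normal]; linear_combination cos_sq_add_sin_sq θ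

lemma offset_dir (θ : ℝ) : offset θ (dir θ) = 0 := by
  simp [dir]; ring

lemma along_smul_dir_add_offset_smul_normal (θ : ℝ) (p : ℝ × ℝ) :
    along θ p • dir θ + offset θ p • normal θ = p := by
  ext <;> simp [dir, normal]
  · linear_combination p.1 * cos_sq_add_sin_sq θ
  · linear_combination p.2 * cos_sq_add_sin_sq θ

lemma eq_along_smul_dir {θ : ℝ} {p : ℝ × ℝ} (h : offset θ p = 0) : p = along θ p • dir θ := by
  simpa [h] using (along_smul_dir_add_offset_smul_normal θ p).symm

lemma along_ne_zero {θ : ℝ} {p : ℝ × ℝ} (hp : p ≠ 0) (h : offset θ p = 0) : along θ p ≠ 0 :=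
  fun h' => hp (by rw [eq_along_smul_dir h, h', zero_smul])

lemma continuous_offset (p : ℝ × ℝ) : Continuous fun θ => offset θ p := by
  simp only [offset_apply]; fun_prop

lemma offset_add_pi (θ : ℝ) (p : ℝ × ℝ) : offset (θ + π) p = -offset θ p := by
  simp [cos_add_pi, sin_add_pi]; ring

lemma mem_lineAt {θ c : ℝ} {p : ℝ × ℝ} : p ∈ lineAt θ c ↔ offset θ p = c := by
  constructor
  · rintro ⟨r, rfl⟩
    simp only [map_add, map_smul, offset_normal, offset_dir, smul_eq_mul, mul_one, mul_zero,
      add_zero]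
  · intro h
    refine ⟨along θ p, ?_⟩
    rw [← h, add_comm]
    exact (along_smul_dir_add_offset_smul_normal θ p).symm

lemma lineThrough2_eq_lineAt {a v : ℝ × ℝ} {θ : ℝ} (hv : v ≠ 0) (hθ : offset θ v = 0) :
    lineThrough2 a v = lineAt θ (offset θ a) := by
  ext p
  rw [mem_lineAt]
  constructor
  · rintro ⟨r, rfl⟩
    simp only [map_add, map_smul, hθ, smul_zero, add_zero]
  · intro hp
    have hpa : offset θ (p - a) = 0 := by rw [map_sub, hp, sub_self]
    have key : ∀ s : ℝ, s ≠ 0 → v = s • dir θ → (along θ (p - a) / s) • v = p - a := by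
      rintro s hs rfl
      rw [smul_smul, div_mul_cancel₀ _ hs, ← eq_along_smul_dir hpa]
    refine ⟨along θ (p - a) / along θ v, ?_⟩
    rw [key _ (along_ne_zero hv hθ) (eq_along_smul_dir hθ), add_sub_cancel]

lemma lineAt_inter_segment_nonempty_iff {θ c : ℝ} {X Y : ℝ × ℝ} :
    (lineAt θ c ∩ segment ℝ X Y).Nonempty ↔ c ∈ uIcc (offset θ X) (offset θ Y) := by
  rw [← segment_eq_uIcc]
  change _ ↔ c ∈ segment ℝ ((offset θ).toAffineMap X) ((offset θ).toAffineMap Y)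
  rw [← image_segment]
  simp [Set.Nonempty, mem_lineAt, and_comm]

lemma exists_offset_eq_zero (d : ℝ × ℝ) (w : ℝ) : ∃ θ ∈ Ico w (w + π), offset θ d = 0 := by
  have hw : (0 : ℝ) ∈ uIcc (offset w d) (offset (w + π) d) := by
    rw [offset_add_pi, mem_uIcc]
    by_cases h : 0 ≤ offset w d
    · exact Or.inr ⟨by linarith, h⟩
    · exact Or.inl ⟨by linarith, by linarith⟩
  obtain ⟨θ, hθ, h0⟩ := intermediate_value_uIcc (continuous_offset d).continuousOn hw
  rw [uIcc_of_le (by linarith [pi_pos])] at hθ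
  rcases hθ.2.lt_or_eq with hlt | rfl
  · exact ⟨θ, ⟨hθ.1, hlt⟩, h0⟩
  · exact ⟨w, ⟨le_rfl, by linarith [pi_pos]⟩, by rwa [← neg_eq_zero, ← offset_add_pi]⟩

lemma eq_of_offset_eq_zero {d : ℝ × ℝ} {θ θ' : ℝ} (hd : d ≠ 0) (h : offset θ d = 0)
    (h' : offset θ' d = 0) (hlt : |θ - θ'| < π) : θ = θ' := by
  have hrot : offset θ' d = cos (θ - θ') * offset θ d + sin (θ - θ') * along θ d := by
    simp only [offset_apply, along_apply, cos_sub, sin_sub]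
    linear_combination (sin θ' * d.1 - cos θ' * d.2) * sin_sq_add_cos_sq θ
  rw [h, h', mul_zero, zero_add, eq_comm, mul_eq_zero] at hrot
  have hsin := hrot.resolve_right (along_ne_zero hd h)
  rw [abs_lt] at hlt
  linarith [(sin_eq_zero_iff_of_lt_of_lt hlt.1 hlt.2).1 hsin]

lemma offset_nonpos_of_le_of_le {d : ℝ × ℝ} {θ₁ θ₂ θ₃ : ℝ} (h₁₂ : θ₁ ≤ θ₂) (h₂₃ : θ₂ ≤ θ₃)
    (hπ : θ₃ - θ₁ < π) (h₁ : offset θ₁ d ≤ 0) (h₃ : offset θ₃ d ≤ 0) : offset θ₂ d ≤ 0 := by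
  rcases h₁₂.lt_or_eq with h₁₂ | rfl
  · have key : sin (θ₃ - θ₁) * offset θ₂ d
        = sin (θ₃ - θ₂) * offset θ₁ d + sin (θ₂ - θ₁) * offset θ₃ d := by
      simp [sin_sub]; ring
    have s₁₃ : 0 < sin (θ₃ - θ₁) := sin_pos_of_pos_of_lt_pi (by linarith) hπ
    have s₂₃ : 0 ≤ sin (θ₃ - θ₂) := sin_nonneg_of_nonneg_of_le_pi (by linarith) (by linarith)
    have s₁₂ : 0 ≤ sin (θ₂ - θ₁) := sin_nonneg_of_nonneg_of_le_pi (by linarith) (by linarith)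
    nlinarith [mul_nonpos_of_nonneg_of_nonpos s₂₃ h₁, mul_nonpos_of_nonneg_of_nonpos s₁₂ h₃]
  · exact h₁

lemma exists_min_max_eq_offset {X Y : ℝ × ℝ} {a b : ℝ}
    (h : ∀ θ ∈ Ioo a b, offset θ (X - Y) = 0 → X = Y) :
    ∃ p q : ℝ × ℝ, ∀ θ ∈ Icc a b,
      offset θ X ⊓ offset θ Y = offset θ p ∧ offset θ X ⊔ offset θ Y = offset θ q := by
  by_cases hXY : X = Y
  · subst hXY
    exact ⟨X, X, fun θ _ => by simp⟩
  rcases forall_nonpos_or_forall_nonneg (continuous_offset (X - Y))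
    (fun θ hθ h0 => hXY (h θ hθ h0)) with hle | hge
  · refine ⟨X, Y, fun θ hθ => ?_⟩
    have := hle θ hθ
    rw [map_sub, sub_nonpos] at this
    exact ⟨inf_eq_left.2 this, sup_eq_right.2 this⟩
  · refine ⟨Y, X, fun θ hθ => ?_⟩
    have := hge θ hθ
    rw [map_sub, sub_nonneg] at this
    exact ⟨inf_eq_right.2 this, sup_eq_left.2 this⟩

section Family

variable {n : ℕ} (x y : Fin n → ℝ × ℝ)

/-- Lines of direction `θ` are parallel to a nondegenerate segment `[x i, y i]`. -/
def IsCriticalAngle (θ : ℝ) : Prop := ∃ i, x i ≠ y i ∧ offset θ (x i - y i) = 0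

/-- Each nondegenerate segment has one critical angle per window of length `π`; taking the window
to start at one of them leaves fewer than `n` critical angles inside the open window. -/
lemma exists_window_card_criticalAngle_lt (hn : 0 < n) :
    ∃ w : ℝ, ∃ A : Finset ℝ, A.card < n ∧
      ∀ θ ∈ Ioo w (w + π), IsCriticalAngle x y θ → θ ∈ A := by
  by_cases hdeg : ∃ i, x i ≠ y i
  swap
  · exact ⟨0, ∅, hn, fun θ _ ⟨i, hi, _⟩ => (hdeg ⟨i, hi⟩).elim⟩
  obtain ⟨i₀, hi₀⟩ := hdeg
  obtain ⟨w, -, hw⟩ := exists_offset_eq_zero (x i₀ - y i₀) 0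
  choose apex hapex using fun i => exists_offset_eq_zero (x i - y i) w
  have huniq : ∀ i, x i ≠ y i → ∀ θ ∈ Ico w (w + π), offset θ (x i - y i) = 0 → θ = apex i := by
    intro i hi θ hθ h0
    refine eq_of_offset_eq_zero (sub_ne_zero.2 hi) h0 (hapex i).2 ?_
    rw [abs_lt]
    constructor <;> linarith [hθ.1, hθ.2, (hapex i).1.1, (hapex i).1.2]
  refine ⟨w, (Finset.univ.erase i₀).image apex, ?_, fun θ hθ ⟨i, hi, h0⟩ => ?_⟩
  · calc _ ≤ (Finset.univ.erase i₀).card := Finset.card_image_le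
      _ < n := by simpa using hn
  · have hθ' : θ ∈ Ico w (w + π) := Ioo_subset_Ico_self hθ
    refine Finset.mem_image.2 ⟨i, Finset.mem_erase.2 ⟨?_, Finset.mem_univ i⟩,
      (huniq i hi θ hθ' h0).symm⟩
    rintro rfl
    have hw₀ := huniq i hi w ⟨le_rfl, by linarith [pi_pos]⟩ hw
    linarith [hθ.1, huniq i hi θ hθ' h0]

variable [NeZero n]

def lowOffset (θ : ℝ) : ℝ :=
  Finset.univ.sup' Finset.univ_nonempty fun i => offset θ (x i) ⊓ offset θ (y i)

def highOffset (θ : ℝ) : ℝ :=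
  Finset.univ.inf' Finset.univ_nonempty fun i => offset θ (x i) ⊔ offset θ (y i)

lemma continuous_lowOffset : Continuous (lowOffset x y) :=
  Continuous.finset_sup'_apply _ fun i _ => (continuous_offset (x i)).min (continuous_offset (y i))

lemma continuous_highOffset : Continuous (highOffset x y) :=
  Continuous.finset_inf'_apply _ fun i _ => (continuous_offset (x i)).max (continuous_offset (y i))

lemma lowOffset_le_highOffset_iff {θ : ℝ} : lowOffset x y θ ≤ highOffset x y θ ↔
    ∀ i j, offset θ (x i) ⊓ offset θ (y i) ≤ offset θ (x j) ⊔ offset θ (y j) := by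
  simp only [lowOffset, highOffset, Finset.sup'_le_iff, Finset.le_inf'_iff, Finset.mem_univ,
    true_implies]
  exact forall_comm

lemma isTransversal2_lineAt_iff {θ c : ℝ} :
    IsTransversal2 (fun i => segment ℝ (x i) (y i)) (lineAt θ c) ↔
      c ∈ Icc (lowOffset x y θ) (highOffset x y θ) := by
  simp only [IsTransversal2, isLine2_lineAt, true_and, lineAt_inter_segment_nonempty_iff, uIcc,
    mem_Icc, lowOffset, highOffset, Finset.sup'_le_iff, Finset.le_inf'_iff, Finset.mem_univ,
    true_implies, forall_and]

lemma exists_lineAt_of_isTransversal2 {L : Set (ℝ × ℝ)}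
    (hL : IsTransversal2 (fun i => segment ℝ (x i) (y i)) L) (w : ℝ) :
    ∃ θ ∈ Ico w (w + π), ∃ c ∈ Icc (lowOffset x y θ) (highOffset x y θ), L = lineAt θ c := by
  obtain ⟨a, v, hv, rfl⟩ := hL.1
  obtain ⟨θ, hθw, hθ⟩ := exists_offset_eq_zero v w
  rw [lineThrough2_eq_lineAt hv hθ] at hL ⊢
  exact ⟨θ, hθw, _, (isTransversal2_lineAt_iff x y).1 hL, rfl⟩

/-- Along a straight path of angles, clamping a straight path of offsets into the feasible
interval gives a continuous family of transversals. -/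
lemma sameComp2_lineAt_of_feasible {θ₁ θ₂ c₁ c₂ : ℝ}
    (hfeas : ∀ θ ∈ uIcc θ₁ θ₂, lowOffset x y θ ≤ highOffset x y θ)
    (hc₁ : c₁ ∈ Icc (lowOffset x y θ₁) (highOffset x y θ₁))
    (hc₂ : c₂ ∈ Icc (lowOffset x y θ₂) (highOffset x y θ₂)) :
    SameComp2 (fun i => segment ℝ (x i) (y i)) (lineAt θ₁ c₁) (lineAt θ₂ c₂) := by
  let Θ : ℝ → ℝ := AffineMap.lineMap θ₁ θ₂
  let c : ℝ → ℝ := fun t =>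
    lowOffset x y (Θ t) ⊔ (highOffset x y (Θ t) ⊓ AffineMap.lineMap c₁ c₂ t)
  have hΘ : Continuous Θ := AffineMap.lineMap_continuous
  have hc : Continuous c :=
    ((continuous_lowOffset x y).comp hΘ).max
      (((continuous_highOffset x y).comp hΘ).min AffineMap.lineMap_continuous)
  have hcΘ : ∀ t ∈ Icc (0 : ℝ) 1, c t ∈ Icc (lowOffset x y (Θ t)) (highOffset x y (Θ t)) :=
    fun t ht => ⟨le_sup_left,
      sup_le (hfeas _ (segment_eq_uIcc θ₁ θ₂ ▸ lineMap_mem_segment ℝ θ₁ θ₂ ht)) inf_le_left⟩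
  have hc₀ : c 0 = c₁ := by
    simp only [c, Θ, AffineMap.lineMap_apply_zero, inf_eq_right.2 hc₁.2, sup_eq_right.2 hc₁.1]
  have hc₁' : c 1 = c₂ := by
    simp only [c, Θ, AffineMap.lineMap_apply_one, inf_eq_right.2 hc₂.2, sup_eq_right.2 hc₂.1]
  refine ⟨fun t => c t • normal (Θ t), fun t => dir (Θ t), ?_, ?_, fun t _ => dir_ne_zero _,
    fun t ht => (isTransversal2_lineAt_iff x y).2 (hcΘ t ht) |>.2, ?_, ?_⟩
  · exact (hc.smul ((by unfold normal; fun_prop : Continuous normal).comp hΘ)).continuousOn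
  · exact ((by unfold dir; fun_prop : Continuous dir).comp hΘ).continuousOn
  · change lineAt (Θ 0) (c 0) = _
    simp only [hc₀, Θ, AffineMap.lineMap_apply_zero]
  · change lineAt (Θ 1) (c 1) = _
    simp only [hc₁', Θ, AffineMap.lineMap_apply_one]

/-- Between two consecutive critical angles each segment has a fixed lowest and highest endpoint,
so feasibility is an intersection of conditions `offset θ d ≤ 0`, each convex in `θ`. -/
lemma lowOffset_le_highOffset_of_mem_Icc {θ₁ θ₃ : ℝ} (hπ : θ₃ - θ₁ < π)
    (hcrit : ∀ θ ∈ Ioo θ₁ θ₃, ¬IsCriticalAngle x y θ)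
    (h₁ : lowOffset x y θ₁ ≤ highOffset x y θ₁) (h₃ : lowOffset x y θ₃ ≤ highOffset x y θ₃)
    {θ : ℝ} (hθ : θ ∈ Icc θ₁ θ₃) : lowOffset x y θ ≤ highOffset x y θ := by
  choose p q hpq using fun i => exists_min_max_eq_offset (a := θ₁) (b := θ₃)
    fun θ hθ h0 => not_not.1 fun hne => hcrit θ hθ ⟨i, hne, h0⟩
  have key : ∀ θ ∈ Icc θ₁ θ₃,
      lowOffset x y θ ≤ highOffset x y θ ↔ ∀ i j, offset θ (p i - q j) ≤ 0 := by
    intro θ hθ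
    simp only [lowOffset_le_highOffset_iff, fun i => (hpq i θ hθ).1, fun i => (hpq i θ hθ).2,
      map_sub, sub_nonpos]
  have hle : θ₁ ≤ θ₃ := hθ.1.trans hθ.2
  rw [key θ hθ]
  intro i j
  exact offset_nonpos_of_le_of_le hθ.1 hθ.2 hπ ((key θ₁ ⟨le_rfl, hle⟩).1 h₁ i j)
    ((key θ₃ ⟨hle, le_rfl⟩).1 h₃ i j)

lemma sameComp2_lineAt {θ₁ θ₂ c₁ c₂ : ℝ} (hπ : |θ₁ - θ₂| < π)
    (hcrit : ∀ θ ∈ uIoo θ₁ θ₂, ¬IsCriticalAngle x y θ)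
    (hc₁ : c₁ ∈ Icc (lowOffset x y θ₁) (highOffset x y θ₁))
    (hc₂ : c₂ ∈ Icc (lowOffset x y θ₂) (highOffset x y θ₂)) :
    SameComp2 (fun i => segment ℝ (x i) (y i)) (lineAt θ₁ c₁) (lineAt θ₂ c₂) := by
  refine sameComp2_lineAt_of_feasible x y (fun θ hθ => ?_) hc₁ hc₂
  rcases le_total θ₁ θ₂ with h | h
  · rw [uIcc_of_le h] at hθ
    rw [uIoo_of_le h] at hcrit
    exact lowOffset_le_highOffset_of_mem_Icc x y (by rw [abs_lt] at hπ; linarith) hcrit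
      (hc₁.1.trans hc₁.2) (hc₂.1.trans hc₂.2) hθ
  · rw [uIcc_of_ge h] at hθ
    rw [uIoo_of_ge h] at hcrit
    exact lowOffset_le_highOffset_of_mem_Icc x y (by rw [abs_lt] at hπ; linarith) hcrit
      (hc₂.1.trans hc₂.2) (hc₁.1.trans hc₁.2) hθ

/-- Equal numbers of critical angles above `θ₁` and above `θ₂` mean that none lies between them. -/
lemma sameComp2_lineAt_of_card_filter_eq {w : ℝ} {A : Finset ℝ}
    (hA : ∀ θ ∈ Ioo w (w + π), IsCriticalAngle x y θ → θ ∈ A) {θ₁ θ₂ c₁ c₂ : ℝ}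
    (hθ₁ : θ₁ ∈ Ico w (w + π)) (hθ₂ : θ₂ ∈ Ico w (w + π))
    (hcard : (A.filter (θ₁ < ·)).card = (A.filter (θ₂ < ·)).card)
    (hc₁ : c₁ ∈ Icc (lowOffset x y θ₁) (highOffset x y θ₁))
    (hc₂ : c₂ ∈ Icc (lowOffset x y θ₂) (highOffset x y θ₂)) :
    SameComp2 (fun i => segment ℝ (x i) (y i)) (lineAt θ₁ c₁) (lineAt θ₂ c₂) := by
  refine sameComp2_lineAt x y ?_ (fun θ hθ hθc => ?_) hc₁ hc₂
  · rw [abs_lt]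
    constructor <;> linarith [hθ₁.1, hθ₁.2, hθ₂.1, hθ₂.2]
  · have hθw : θ ∈ Ioo w (w + π) :=
      ⟨(le_min hθ₁.1 hθ₂.1).trans_lt hθ.1, hθ.2.trans (max_lt hθ₁.2 hθ₂.2)⟩
    exact Finset.notMem_uIoo_of_card_filter_lt_eq hcard (hA θ hθw hθc) hθ

end Family

end SegmentTransversal

open SegmentTransversal

/-- the set of transversal lines in ℝ² to `n ≥ 3` segments has at most `n`
connected components. -/
theorem stmt_15 (n : ℕ) (hn : 3 ≤ n) (x y : Fin n → ℝ × ℝ) :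
    ∃ m : ℕ, m ≤ n ∧ ∃ T : Fin m → Set (ℝ × ℝ),
      (∀ j, IsTransversal2 (fun i => segment ℝ (x i) (y i)) (T j)) ∧
      ∀ L, IsTransversal2 (fun i => segment ℝ (x i) (y i)) L →
        ∃ j, SameComp2 (fun i => segment ℝ (x i) (y i)) L (T j) := by
  have : NeZero n := ⟨by omega⟩
  obtain ⟨w, A, hA, hcrit⟩ := exists_window_card_criticalAngle_lt x y (by omega)
  obtain ⟨m, hm, T, hT, hcover⟩ := exists_fin_representatives
    (fun p : ℝ × ℝ => p.1 ∈ Ico w (w + π) ∧ p.2 ∈ Icc (lowOffset x y p.1) (highOffset x y p.1))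
    (fun p q => SameComp2 (fun i => segment ℝ (x i) (y i)) (lineAt p.1 p.2) (lineAt q.1 q.2))
    n (fun p => (A.filter (p.1 < ·)).card)
    (fun _ _ => (Finset.card_filter_le _ _).trans_lt hA)
    (fun _ _ hp hq hpq => sameComp2_lineAt_of_card_filter_eq x y hcrit hp.1 hq.1 hpq hp.2 hq.2)
  refine ⟨m, hm, fun j => lineAt (T j).1 (T j).2,
    fun j => (isTransversal2_lineAt_iff x y).2 (hT j).2, fun L hL => ?_⟩
  obtain ⟨θ, hθ, c, hc, rfl⟩ := exists_lineAt_of_isTransversal2 x y hL w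
  exact hcover (θ, c) ⟨hθ, hc⟩
end
end

section
/- Let s₁, …, s_n be closed line segments in ℝ² and let W = {(a, b) ∈ ℝ² : for every i the line {(x, a*x + b) : x ∈ ℝ} meets sᵢ}. If W has at least n + 1 connected components (i.e., there exist n + 1 points of W lying pairwise in distinct connected components of W), then there exists x₀ ∈ ℝ such that the vertical line {(x₀, y) : y ∈ ℝ} meets every segment sᵢ. -/
open Set

noncomputable section

/-!
A line `y = a x + b` meets the segment `[p, q]` iff the offsets `p.2 - a p.1 - b` and
`q.2 - a q.1 - b` have product `≤ 0`. If two parameters `(a, b)`, `(a', b')` of transversals see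
the direction `p - q` of every segment with the same orientation (the sign of `tilt p q`), the
whole parameter segment between them consists of transversals; hence two points of `W` in
different components are separated by the slope at which the affine function `tilt p q` of some
segment changes sign. Sorting the `n + 1` slopes, each of the `n` gaps between consecutive slopes
contains such a sign change, and each segment changes sign at most once, so every segment changes
sign between the smallest and the largest slope. The two lines with these extreme slopes then
cross at an abscissa whose vertical line meets every segment.
-/

theorem zero_mem_uIcc_iff {u v : ℝ} : (0 : ℝ) ∈ uIcc u v ↔ u * v ≤ 0 := by
  rw [mem_uIcc, mul_nonpos_iff]
  tauto

theorem AffineMap.preimage_zero_inter_segment_nonempty_iff {E : Type*} [AddCommGroup E]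
    [Module ℝ E] (f : E →ᵃ[ℝ] ℝ) (p q : E) :
    (f ⁻¹' {0} ∩ segment ℝ p q).Nonempty ↔ f p * f q ≤ 0 := by
  rw [inter_comm, ← image_inter_nonempty_iff, image_segment, segment_eq_uIcc,
    inter_singleton_nonempty, zero_mem_uIcc_iff]

theorem add_mul_add_nonpos {A B C D : ℝ} (hAB : A * B ≤ 0) (hCD : C * D ≤ 0)
    (h : 0 ≤ (A - B) * (C - D)) : (A + C) * (B + D) ≤ 0 := by
  rcases mul_nonpos_iff.mp hAB with ⟨hA, hB⟩ | ⟨hA, hB⟩ <;>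
    rcases mul_nonpos_iff.mp hCD with ⟨hC, hD⟩ | ⟨hC, hD⟩ <;> nlinarith

section SignChange

variable {α : Type*} [Preorder α] {f : α → ℝ} {x y x' y' : α}

theorem Monotone.neg_and_pos_of_mul_neg (hf : Monotone f) (hxy : x ≤ y) (h : f x * f y < 0) :
    f x < 0 ∧ 0 < f y := by
  rcases mul_neg_iff.mp h with ⟨hx, hy⟩ | hxy'
  · linarith [hf hxy]
  · exact hxy'

theorem mul_neg_of_mul_neg_of_le_of_le (hf : Monotone f ∨ Antitone f) (hx : x' ≤ x)
    (hxy : x ≤ y) (hy : y ≤ y') (h : f x * f y < 0) : f x' * f y' < 0 := by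
  wlog hmono : Monotone f generalizing f
  · have hanti : Antitone f := hf.resolve_left hmono
    simpa only [Pi.neg_apply, neg_mul_neg] using
      this (Or.inl hanti.neg) (by simpa only [Pi.neg_apply, neg_mul_neg]) hanti.neg
  obtain ⟨hfx, hfy⟩ := hmono.neg_and_pos_of_mul_neg hxy h
  exact mul_neg_of_neg_of_pos (by linarith [hmono hx]) (by linarith [hmono hy])

theorem mul_pos_of_mul_neg_of_le_of_le (hf : Monotone f ∨ Antitone f) (hxy : x ≤ y)
    (hy : y ≤ x') (hxy' : x' ≤ y') (h : f x * f y < 0) : 0 < f x' * f y' := by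
  wlog hmono : Monotone f generalizing f
  · have hanti : Antitone f := hf.resolve_left hmono
    simpa only [Pi.neg_apply, neg_mul_neg] using
      this (Or.inl hanti.neg) (by simpa only [Pi.neg_apply, neg_mul_neg]) hanti.neg
  obtain ⟨-, hfy⟩ := hmono.neg_and_pos_of_mul_neg hxy h
  exact mul_pos (by linarith [hmono hy]) (by linarith [hmono hy, hmono hxy'])

end SignChange

theorem Fintype.forall_exists_of_card_le {ι κ : Type*} [Fintype ι] [Fintype κ]
    (hcard : Fintype.card ι ≤ Fintype.card κ) {R : ι → κ → Prop} (hR : ∀ k, ∃ i, R i k)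
    (hR' : ∀ i k l, R i k → R i l → k = l) : ∀ i, ∃ k, R i k := by
  choose g hg using hR
  have hinj : Function.Injective g := fun k l hkl => hR' _ _ _ (hg k) (hkl ▸ hg l)
  have hbij : Function.Bijective g := (Fintype.bijective_iff_injective_and_card g).mpr
    ⟨hinj, le_antisymm (Fintype.card_le_of_injective g hinj) hcard⟩
  intro i
  obtain ⟨k, rfl⟩ := hbij.2 i
  exact ⟨k, hg k⟩

theorem Fin.eq_of_mul_neg_of_mul_neg {α : Type*} [Preorder α] {f : α → ℝ} {n : ℕ}
    {a : Fin (n + 1) → α} (ha : Monotone a) (hf : Monotone f ∨ Antitone f) {k l : Fin n}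
    (hk : f (a k.castSucc) * f (a k.succ) < 0) (hl : f (a l.castSucc) * f (a l.succ) < 0) :
    k = l := by
  by_contra hne
  wlog hlt : k < l generalizing k l
  · exact this hl hk (Ne.symm hne) ((not_lt.mp hlt).lt_of_ne (Ne.symm hne))
  exact (mul_pos_of_mul_neg_of_le_of_le hf (ha k.castSucc_le_succ)
    (ha (Fin.succ_le_castSucc_iff.mpr hlt)) (ha l.castSucc_le_succ) hk).not_gt hl

def lineOffset (ab : ℝ × ℝ) : ℝ × ℝ →ᵃ[ℝ] ℝ :=
  (LinearMap.snd ℝ ℝ ℝ - ab.1 • LinearMap.fst ℝ ℝ ℝ).toAffineMap - AffineMap.const ℝ _ ab.2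

@[simp]
theorem lineOffset_apply (ab z : ℝ × ℝ) : lineOffset ab z = z.2 - ab.1 * z.1 - ab.2 := by
  simp [lineOffset]

/-- The determinant of the direction `(1, a)` of lines of slope `a` and of `p - q`. -/
def tilt (p q : ℝ × ℝ) (a : ℝ) : ℝ := (p.2 - q.2) - a * (p.1 - q.1)

theorem lineOffset_sub_lineOffset (ab p q : ℝ × ℝ) :
    lineOffset ab p - lineOffset ab q = tilt p q ab.1 := by
  simp only [lineOffset_apply, tilt]
  ring

theorem tilt_monotone_or_antitone (p q : ℝ × ℝ) : Monotone (tilt p q) ∨ Antitone (tilt p q) := by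
  rcases le_total (p.1 - q.1) 0 with h | h
  · exact Or.inl fun a a' haa' => by simp only [tilt]; nlinarith
  · exact Or.inr fun a a' haa' => by simp only [tilt]; nlinarith

theorem lineOffset_convex_combination {s t : ℝ} (hst : s + t = 1) (w w' z : ℝ × ℝ) :
    lineOffset (s • w + t • w') z = s * lineOffset w z + t * lineOffset w' z := by
  simp only [lineOffset_apply, Prod.fst_add, Prod.snd_add, Prod.smul_fst, Prod.smul_snd,
    smul_eq_mul]
  linear_combination -z.2 * hst

theorem graph_inter_segment_nonempty_iff (ab p q : ℝ × ℝ) :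
    ({z : ℝ × ℝ | ∃ u : ℝ, z = (u, ab.1 * u + ab.2)} ∩ segment ℝ p q).Nonempty ↔
      lineOffset ab p * lineOffset ab q ≤ 0 := by
  rw [← (lineOffset ab).preimage_zero_inter_segment_nonempty_iff]
  congr!
  ext z
  simp [Prod.ext_iff, sub_sub, sub_eq_zero]

theorem vertical_inter_segment_nonempty_iff (x₀ : ℝ) (p q : ℝ × ℝ) :
    ({z : ℝ × ℝ | ∃ v : ℝ, z = (x₀, v)} ∩ segment ℝ p q).Nonempty ↔
      (p.1 - x₀) * (q.1 - x₀) ≤ 0 := by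
  convert ((AffineMap.fst : ℝ × ℝ →ᵃ[ℝ] ℝ) - AffineMap.const ℝ (ℝ × ℝ) x₀)
    |>.preimage_zero_inter_segment_nonempty_iff p q using 3
  · ext z
    simp [Prod.ext_iff, sub_eq_zero, eq_comm]
  all_goals rfl

theorem lineOffset_mul_nonpos_of_mem_segment {p q w w' z : ℝ × ℝ}
    (hw : lineOffset w p * lineOffset w q ≤ 0) (hw' : lineOffset w' p * lineOffset w' q ≤ 0)
    (htilt : 0 ≤ tilt p q w.1 * tilt p q w'.1) (hz : z ∈ segment ℝ w w') :
    lineOffset z p * lineOffset z q ≤ 0 := by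
  obtain ⟨s, t, hs, ht, hst, rfl⟩ := hz
  rw [lineOffset_convex_combination hst, lineOffset_convex_combination hst]
  refine add_mul_add_nonpos ?_ ?_ ?_
  · nlinarith [mul_nonneg hs hs]
  · nlinarith [mul_nonneg ht ht]
  · rw [← lineOffset_sub_lineOffset, ← lineOffset_sub_lineOffset] at htilt
    nlinarith [mul_nonneg hs ht]

def transversals {ι : Type*} (p q : ι → ℝ × ℝ) : Set (ℝ × ℝ) :=
  {ab | ∀ i, ({z : ℝ × ℝ | ∃ u : ℝ, z = (u, ab.1 * u + ab.2)} ∩ segment ℝ (p i) (q i)).Nonempty}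

theorem mem_transversals_iff {ι : Type*} {p q : ι → ℝ × ℝ} {ab : ℝ × ℝ} :
    ab ∈ transversals p q ↔ ∀ i, lineOffset ab (p i) * lineOffset ab (q i) ≤ 0 :=
  forall_congr' fun i => graph_inter_segment_nonempty_iff ab (p i) (q i)

theorem exists_tilt_mul_neg_of_notMem_connectedComponentIn {ι : Type*} {p q : ι → ℝ × ℝ}
    {w w' : ℝ × ℝ} (hw : w ∈ transversals p q) (hw' : w' ∈ transversals p q)
    (h : w' ∉ connectedComponentIn (transversals p q) w) :
    ∃ i, tilt (p i) (q i) w.1 * tilt (p i) (q i) w'.1 < 0 := by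
  by_contra! htilt
  refine h ((convex_segment w w').isPreconnected.subset_connectedComponentIn
    (left_mem_segment ℝ w w') ?_ (right_mem_segment ℝ w w'))
  intro z hz
  rw [mem_transversals_iff] at hw hw' ⊢
  exact fun i => lineOffset_mul_nonpos_of_mem_segment (hw i) (hw' i) (htilt i) hz

theorem vertical_inter_segment_nonempty_of_tilt_mul_neg {p q w w' : ℝ × ℝ}
    (hw : lineOffset w p * lineOffset w q ≤ 0) (hw' : lineOffset w' p * lineOffset w' q ≤ 0)
    (htilt : tilt p q w.1 * tilt p q w'.1 < 0) :
    ({z : ℝ × ℝ | ∃ v : ℝ, z = ((w.2 - w'.2) / (w'.1 - w.1), v)} ∩ segment ℝ p q).Nonempty := by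
  rw [vertical_inter_segment_nonempty_iff]
  have hne : w'.1 - w.1 ≠ 0 := fun h0 => by
    rw [← sub_eq_zero.mp h0] at htilt
    nlinarith
  have hcross := add_mul_add_nonpos hw (by rwa [neg_mul_neg]) (by
    rw [← lineOffset_sub_lineOffset, ← lineOffset_sub_lineOffset] at htilt
    nlinarith : 0 ≤ (lineOffset w p - lineOffset w q) * (-lineOffset w' p - -lineOffset w' q))
  have hfactor : (lineOffset w p + -lineOffset w' p) * (lineOffset w q + -lineOffset w' q) =
      (w'.1 - w.1) ^ 2 * ((p.1 - (w.2 - w'.2) / (w'.1 - w.1)) *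
        (q.1 - (w.2 - w'.2) / (w'.1 - w.1))) := by
    simp only [lineOffset_apply]
    field_simp
    ring
  rw [hfactor] at hcross
  exact nonpos_of_mul_nonpos_right hcross (by positivity)

/-- if the set `W` of parameters `(a, b)` whose line `y = a*x + b` meets
every one of `n` segments in ℝ² has at least `n + 1` connected components, then some
vertical line meets every segment. -/
theorem stmt_18 (n : ℕ) (x y : Fin n → ℝ × ℝ) (W : Set (ℝ × ℝ))
    (hW : W = {ab : ℝ × ℝ | ∀ i,
      ({p : ℝ × ℝ | ∃ u : ℝ, p = (u, ab.1 * u + ab.2)} ∩ segment ℝ (x i) (y i)).Nonempty})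
    (w : Fin (n + 1) → ℝ × ℝ) (hw : ∀ j, w j ∈ W)
    (hdist : ∀ j k, j ≠ k → w k ∉ connectedComponentIn W (w j)) :
    ∃ x₀ : ℝ, ∀ i,
      ({p : ℝ × ℝ | ∃ v : ℝ, p = (x₀, v)} ∩ segment ℝ (x i) (y i)).Nonempty := by
  change W = transversals x y at hW
  subst hW
  set v := w ∘ Tuple.sort fun j => (w j).1
  have hv : Monotone fun k => (v k).1 := Tuple.monotone_sort fun j => (w j).1
  have hgap : ∀ k : Fin n, ∃ i,
      tilt (x i) (y i) (v k.castSucc).1 * tilt (x i) (y i) (v k.succ).1 < 0 :=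
    fun k => exists_tilt_mul_neg_of_notMem_connectedComponentIn (hw _) (hw _)
      (hdist _ _ ((Tuple.sort _).injective.ne k.castSucc_lt_succ.ne))
  have hcross : ∀ i, ∃ k : Fin n,
      tilt (x i) (y i) (v k.castSucc).1 * tilt (x i) (y i) (v k.succ).1 < 0 :=
    Fintype.forall_exists_of_card_le (by simp) hgap
      fun i _ _ => Fin.eq_of_mul_neg_of_mul_neg hv (tilt_monotone_or_antitone _ _)
  refine ⟨((v 0).2 - (v (Fin.last n)).2) / ((v (Fin.last n)).1 - (v 0).1), fun i => ?_⟩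
  obtain ⟨k, hk⟩ := hcross i
  exact vertical_inter_segment_nonempty_of_tilt_mul_neg (mem_transversals_iff.mp (hw _) i)
    (mem_transversals_iff.mp (hw _) i) (mul_neg_of_mul_neg_of_le_of_le
      (tilt_monotone_or_antitone _ _) (hv (Fin.zero_le _)) (hv k.castSucc_le_succ)
      (hv (Fin.le_last _)) hk)
end
end

section
/- Let ℓ₁, ℓ₂, ℓ₃, ℓ₄ be four lines in ℝ³. If there exist at least three pairwise distinct lines each meeting all of ℓ₁, ℓ₂, ℓ₃, ℓ₄, then the set of lines meeting all of ℓ₁, ℓ₂, ℓ₃, ℓ₄ is infinite. -/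
open Set

noncomputable section

/-- The line in ℝ³ through `a` with direction `v`. -/
def lineThrough (a v : ℝ × ℝ × ℝ) : Set (ℝ × ℝ × ℝ) :=
  {p | ∃ r : ℝ, p = a + r • v}

/-- `L` is a line in ℝ³. -/
def IsLine (L : Set (ℝ × ℝ × ℝ)) : Prop :=
  ∃ a v : ℝ × ℝ × ℝ, v ≠ 0 ∧ L = lineThrough a v

/-- `L` is a transversal to the family of sets `s`: it is a line meeting every `s i`. -/
def IsTransversal {n : ℕ} (s : Fin n → Set (ℝ × ℝ × ℝ)) (L : Set (ℝ × ℝ × ℝ)) : Prop :=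
  IsLine L ∧ ∀ i, (L ∩ s i).Nonempty

/-- Two transversals `L₀`, `L₁` to the family `s` lie in the same connected component of
transversals: one can be moved continuously to the other while remaining a transversal. -/
def SameComp {n : ℕ} (s : Fin n → Set (ℝ × ℝ × ℝ)) (L₀ L₁ : Set (ℝ × ℝ × ℝ)) : Prop :=
  ∃ a v : ℝ → ℝ × ℝ × ℝ,
    ContinuousOn a (Icc 0 1) ∧ ContinuousOn v (Icc 0 1) ∧
    (∀ t ∈ Icc (0:ℝ) 1, v t ≠ 0) ∧
    (∀ t ∈ Icc (0:ℝ) 1, ∀ i, (lineThrough (a t) (v t) ∩ s i).Nonempty) ∧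
    lineThrough (a 0) (v 0) = L₀ ∧ lineThrough (a 1) (v 1) = L₁

abbrev V3 := ℝ × ℝ × ℝ

def dot3 (x y : V3) : ℝ := x.1 * y.1 + x.2.1 * y.2.1 + x.2.2 * y.2.2

def cr (x y : V3) : V3 :=
  (x.2.1 * y.2.2 - x.2.2 * y.2.1, x.2.2 * y.1 - x.1 * y.2.2, x.1 * y.2.1 - x.2.1 * y.1)

def pair2 (x y : V3 × V3) : ℝ := dot3 x.1 y.2 + dot3 x.2 y.1

def q2 (x : V3 × V3) : ℝ := dot3 x.1 x.2

lemma cr_smul_left (c : ℝ) (x y : V3) : cr (c • x) y = c • cr x y := by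
  obtain ⟨x1, x2, x3⟩ := x; obtain ⟨y1, y2, y3⟩ := y
  simp [cr, Prod.ext_iff, smul_eq_mul, Prod.smul_def]; constructor <;> [skip; constructor] <;> ring

lemma cr_smul_right (c : ℝ) (x y : V3) : cr x (c • y) = c • cr x y := by
  obtain ⟨x1, x2, x3⟩ := x; obtain ⟨y1, y2, y3⟩ := y
  simp [cr, Prod.ext_iff, smul_eq_mul, Prod.smul_def]; constructor <;> [skip; constructor] <;> ring

lemma cr_add_left (x y z : V3) : cr (x + y) z = cr x z + cr y z := by
  obtain ⟨x1, x2, x3⟩ := x; obtain ⟨y1, y2, y3⟩ := y; obtain ⟨z1, z2, z3⟩ := z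
  simp [cr, Prod.ext_iff]; constructor <;> [skip; constructor] <;> ring

lemma cr_sub_left (x y z : V3) : cr (x - y) z = cr x z - cr y z := by
  obtain ⟨x1, x2, x3⟩ := x; obtain ⟨y1, y2, y3⟩ := y; obtain ⟨z1, z2, z3⟩ := z
  simp [cr, Prod.ext_iff]; constructor <;> [skip; constructor] <;> ring

lemma dot3_self_ne_zero {x : V3} (hx : x ≠ 0) : dot3 x x ≠ 0 := by
  obtain ⟨x1, x2, x3⟩ := x
  simp only [dot3, Prod.mk.injEq, ne_eq, Prod.ext_iff, Prod.fst_zero, Prod.snd_zero] at *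
  intro h
  exact hx ⟨by nlinarith, by nlinarith, by nlinarith⟩

lemma eq_smul_of_cr_eq_zero {v w : V3} (hv : v ≠ 0) (h : cr v w = 0) : ∃ c : ℝ, w = c • v := by
  obtain ⟨v1, v2, v3⟩ := v; obtain ⟨w1, w2, w3⟩ := w
  simp only [cr, Prod.ext_iff, Prod.mk.injEq, ne_eq, Prod.fst_zero, Prod.snd_zero] at *
  obtain ⟨h1, h2, h3⟩ := h
  simp only [Prod.smul_def, smul_eq_mul]
  by_cases hv1 : v1 = 0
  · subst hv1
    by_cases hv2 : v2 = 0
    · subst hv2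
      have hv3 : v3 ≠ 0 := by tauto
      refine ⟨w3 / v3, ?_, ?_, ?_⟩
      · have hw1 : v3 * w1 = 0 := by linarith
        simpa using (mul_eq_zero.mp hw1).resolve_left hv3
      · have hw2 : v3 * w2 = 0 := by linarith
        simpa using (mul_eq_zero.mp hw2).resolve_left hv3
      · field_simp
    · refine ⟨w2 / v2, ?_, ?_, ?_⟩
      · have hw1 : v2 * w1 = 0 := by linarith
        simpa using (mul_eq_zero.mp hw1).resolve_left hv2
      · field_simp
      · field_simp
        linear_combination h1
  · refine ⟨w1 / v1, ?_, ?_, ?_⟩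
    · field_simp
    · field_simp
      linear_combination h3
    · field_simp
      linear_combination -h2

lemma mem_lineThrough_self (a v : V3) : a ∈ lineThrough a v := ⟨0, by module⟩

lemma lineThrough_eq_of_mem {a b v : V3} (h : b ∈ lineThrough a v) :
    lineThrough b v = lineThrough a v := by
  obtain ⟨r, rfl⟩ := h
  ext q
  constructor
  · rintro ⟨t, rfl⟩; exact ⟨r + t, by module⟩
  · rintro ⟨t, rfl⟩; exact ⟨t - r, by module⟩

lemma lineThrough_smul {a v : V3} {c : ℝ} (hc : c ≠ 0) :
    lineThrough a (c • v) = lineThrough a v := by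
  ext q
  constructor
  · rintro ⟨t, rfl⟩; exact ⟨t * c, by module⟩
  · rintro ⟨t, rfl⟩; exact ⟨t / c, by rw [smul_smul, div_mul_cancel₀ _ hc]⟩

lemma cr_affine (a v : V3) (r c : ℝ) : cr (a + r • v) (c • v) = c • cr a v := by
  obtain ⟨a1, a2, a3⟩ := a; obtain ⟨v1, v2, v3⟩ := v
  simp [cr, Prod.ext_iff, Prod.smul_def, smul_eq_mul]
  refine ⟨by ring, by ring, by ring⟩

lemma plucker_of_line_eq {a v b w : V3} (h : lineThrough a v = lineThrough b w) :
    ∃ c : ℝ, w = c • v ∧ cr b w = c • cr a v := by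
  have hb : b ∈ lineThrough a v := h ▸ mem_lineThrough_self b w
  have hbw : b + w ∈ lineThrough a v := h ▸ ⟨1, by module⟩
  obtain ⟨r, hr⟩ := hb
  obtain ⟨r', hr'⟩ := hbw
  have hw : w = (r' - r) • v := by linear_combination (norm := module) hr' - hr
  refine ⟨r' - r, hw, ?_⟩
  rw [hr, hw, cr_affine]

lemma line_eq_of_plucker {a v b w : V3} (hw : w ≠ 0) (c : ℝ)
    (h1 : w = c • v) (h2 : cr b w = c • cr a v) : lineThrough a v = lineThrough b w := by
  have hc : c ≠ 0 := by rintro rfl; rw [zero_smul] at h1; exact hw h1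
  rw [h1, cr_smul_right] at h2
  have h3 : cr b v = cr a v := smul_right_injective _ hc h2
  have h4 : cr v (b - a) = 0 := by
    obtain ⟨a1, a2, a3⟩ := a; obtain ⟨v1, v2, v3⟩ := v; obtain ⟨b1, b2, b3⟩ := b
    simp only [cr, Prod.ext_iff, Prod.mk.injEq, Prod.fst_zero, Prod.snd_zero, Prod.fst_sub,
      Prod.snd_sub, Prod.mk_sub_mk] at h3 ⊢
    refine ⟨by linarith [h3.1, h3.2.1, h3.2.2], by linarith [h3.1, h3.2.1, h3.2.2],
      by linarith [h3.1, h3.2.1, h3.2.2]⟩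
  have hv : v ≠ 0 := by rintro rfl; rw [smul_zero] at h1; exact hw h1
  obtain ⟨t, ht⟩ := eq_smul_of_cr_eq_zero hv h4
  have hb : b ∈ lineThrough a v := ⟨t, by linear_combination (norm := module) ht⟩
  rw [h1, lineThrough_smul hc, lineThrough_eq_of_mem hb]

lemma line_eq_of_parallel_meet {a v b w : V3} (hv : v ≠ 0) (hw : w ≠ 0)
    (hcr : cr v w = 0) (hne : (lineThrough a v ∩ lineThrough b w).Nonempty) :
    lineThrough a v = lineThrough b w := by
  obtain ⟨c, rfl⟩ := eq_smul_of_cr_eq_zero hv hcr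
  have hc : c ≠ 0 := by rintro rfl; rw [zero_smul] at hw; exact hw rfl
  obtain ⟨q, ⟨r, rfl⟩, ⟨s, hs⟩⟩ := hne
  have hb : b ∈ lineThrough a v := ⟨r - s * c, by linear_combination (norm := module) -hs⟩
  rw [lineThrough_smul hc, lineThrough_eq_of_mem hb]

lemma pair_zero_of_meet {a v b w : V3}
    (h : (lineThrough a v ∩ lineThrough b w).Nonempty) :
    pair2 (v, cr a v) (w, cr b w) = 0 := by
  obtain ⟨q, ⟨r, rfl⟩, ⟨s, hs⟩⟩ := h
  have hb : b = a + r • v - s • w := by linear_combination (norm := module) -hs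
  subst hb
  obtain ⟨a1, a2, a3⟩ := a; obtain ⟨v1, v2, v3⟩ := v; obtain ⟨w1, w2, w3⟩ := w
  simp [pair2, dot3, cr, Prod.smul_def, smul_eq_mul]
  ring

lemma meet_of_coplanar {a v b w : V3} (hv : v ≠ 0) (hw : w ≠ 0) (hcr : cr v w ≠ 0)
    (hp : pair2 (v, cr a v) (w, cr b w) = 0) :
    (lineThrough a v ∩ lineThrough b w).Nonempty := by
  set z := cr v w with hz_def
  have hz : dot3 z z ≠ 0 := dot3_self_ne_zero hcr
  have hxz : dot3 (b - a) z = 0 := by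
    obtain ⟨a1, a2, a3⟩ := a; obtain ⟨v1, v2, v3⟩ := v
    obtain ⟨b1, b2, b3⟩ := b; obtain ⟨w1, w2, w3⟩ := w
    simp only [pair2, dot3, cr, hz_def, Prod.fst_sub, Prod.snd_sub, Prod.mk_sub_mk] at hp ⊢
    linear_combination -hp
  have key : dot3 z z • (b - a) =
      (dot3 (b - a) (cr w z)) • v + (dot3 v (cr (b - a) z)) • w + (dot3 (b - a) z) • z := by
    obtain ⟨a1, a2, a3⟩ := a; obtain ⟨v1, v2, v3⟩ := v
    obtain ⟨b1, b2, b3⟩ := b; obtain ⟨w1, w2, w3⟩ := w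
    simp only [hz_def, dot3, cr, Prod.smul_def, smul_eq_mul, Prod.ext_iff, Prod.fst_sub,
      Prod.snd_sub, Prod.mk_sub_mk, Prod.fst_add, Prod.snd_add, Prod.mk_add_mk]
    refine ⟨by ring, by ring, by ring⟩
  rw [hxz, zero_smul, add_zero] at key
  have key2 : b - a = ((dot3 z z)⁻¹ * dot3 (b - a) (cr w z)) • v +
      ((dot3 z z)⁻¹ * dot3 v (cr (b - a) z)) • w := by
    have := congrArg (fun y => (dot3 z z)⁻¹ • y) key
    simpa [smul_smul, smul_add, inv_mul_cancel₀ hz] using this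
  exact ⟨a + ((dot3 z z)⁻¹ * dot3 (b - a) (cr w z)) • v, ⟨_, rfl⟩,
    ⟨-((dot3 z z)⁻¹ * dot3 v (cr (b - a) z)), by linear_combination (norm := module) -key2⟩⟩

lemma recon {v m : V3} (hv : v ≠ 0) (h : dot3 v m = 0) :
    cr ((dot3 v v)⁻¹ • cr v m) v = m := by
  have hvv : dot3 v v ≠ 0 := dot3_self_ne_zero hv
  have key : cr (cr v m) v = dot3 v v • m - dot3 v m • v := by
    obtain ⟨v1, v2, v3⟩ := v; obtain ⟨m1, m2, m3⟩ := m
    simp only [dot3, cr, Prod.smul_def, smul_eq_mul, Prod.ext_iff, Prod.fst_sub, Prod.snd_sub,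
      Prod.mk_sub_mk]
    refine ⟨by ring, by ring, by ring⟩
  rw [cr_smul_left, key, h, zero_smul, sub_zero, smul_smul, inv_mul_cancel₀ hvv, one_smul]

lemma quad_scalar {x0 x1 x2 s1 s2 s3 : ℝ} (h12 : s1 ≠ s2) (h13 : s1 ≠ s3) (h23 : s2 ≠ s3)
    (e1 : x0 + s1 * x1 + s1 ^ 2 * x2 = 0) (e2 : x0 + s2 * x1 + s2 ^ 2 * x2 = 0)
    (e3 : x0 + s3 * x1 + s3 ^ 2 * x2 = 0) : x0 = 0 ∧ x1 = 0 ∧ x2 = 0 := by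
  have hx2 : ((s1 - s2) * (s1 - s3) * (s2 - s3)) * x2 = 0 := by
    linear_combination (s2 - s3) * e1 - (s1 - s3) * e2 + (s1 - s2) * e3
  have h2 : x2 = 0 := by
    have hne : (s1 - s2) * (s1 - s3) * (s2 - s3) ≠ 0 := by
      refine mul_ne_zero (mul_ne_zero ?_ ?_) ?_ <;> exact sub_ne_zero.mpr ‹_›
    exact (mul_eq_zero.mp hx2).resolve_left hne
  have hx1 : (s1 - s2) * x1 = 0 := by
    linear_combination e1 - e2 + (s2 ^ 2 - s1 ^ 2) * h2
  have h1 : x1 = 0 := (mul_eq_zero.mp hx1).resolve_left (sub_ne_zero.mpr h12)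
  have h0 : x0 = 0 := by linear_combination e1 - s1 * h1 - s1 ^ 2 * h2
  exact ⟨h0, h1, h2⟩

lemma three_of_infinite {S : Set ℝ} (h : S.Infinite) :
    ∃ s1 s2 s3, s1 ∈ S ∧ s2 ∈ S ∧ s3 ∈ S ∧ s1 ≠ s2 ∧ s1 ≠ s3 ∧ s2 ≠ s3 := by
  obtain ⟨s1, h1⟩ := h.nonempty
  obtain ⟨s2, h2⟩ := (h.diff (Set.finite_singleton s1)).nonempty
  obtain ⟨s3, h3⟩ := (h.diff (Set.Finite.insert s1 (Set.finite_singleton s2))).nonempty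
  simp only [Set.mem_diff, Set.mem_singleton_iff, Set.mem_insert_iff, not_or] at h2 h3
  exact ⟨s1, s2, s3, h1, h2.1, h3.1, fun he => h2.2 he.symm, fun he => h3.2.1 he.symm,
    fun he => h3.2.2 he.symm⟩

lemma quad_vec {e0 e1 e2 : V3} (h : {s : ℝ | e0 + s • e1 + s ^ 2 • e2 = 0}.Infinite) :
    e0 = 0 ∧ e1 = 0 ∧ e2 = 0 := by
  obtain ⟨s1, s2, s3, hs1, hs2, hs3, h12, h13, h23⟩ := three_of_infinite h
  obtain ⟨a1, a2, a3⟩ := e0; obtain ⟨b1, b2, b3⟩ := e1; obtain ⟨c1, c2, c3⟩ := e2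
  simp only [Set.mem_setOf_eq, Prod.smul_def, smul_eq_mul, Prod.mk_add_mk, Prod.ext_iff,
    Prod.mk.injEq, Prod.fst_zero, Prod.snd_zero] at hs1 hs2 hs3
  obtain ⟨q11, q12, q13⟩ := hs1
  obtain ⟨q21, q22, q23⟩ := hs2
  obtain ⟨q31, q32, q33⟩ := hs3
  have r1 := quad_scalar h12 h13 h23 (by linarith : a1 + s1 * b1 + s1 ^ 2 * c1 = 0)
    (by linarith : a1 + s2 * b1 + s2 ^ 2 * c1 = 0) (by linarith : a1 + s3 * b1 + s3 ^ 2 * c1 = 0)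
  have r2 := quad_scalar h12 h13 h23 (by linarith : a2 + s1 * b2 + s1 ^ 2 * c2 = 0)
    (by linarith : a2 + s2 * b2 + s2 ^ 2 * c2 = 0) (by linarith : a2 + s3 * b2 + s3 ^ 2 * c2 = 0)
  have r3 := quad_scalar h12 h13 h23 (by linarith : a3 + s1 * b3 + s1 ^ 2 * c3 = 0)
    (by linarith : a3 + s2 * b3 + s2 ^ 2 * c3 = 0) (by linarith : a3 + s3 * b3 + s3 ^ 2 * c3 = 0)
  refine ⟨?_, ?_, ?_⟩ <;> simp only [Prod.ext_iff, Prod.mk.injEq, Prod.fst_zero, Prod.snd_zero] <;>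
    exact ⟨by tauto, by tauto, by tauto⟩

lemma q2_combo (P1 P2 P3 : V3 × V3) (A B C : ℝ) :
    q2 (A • P1 + B • P2 + C • P3) =
      A ^ 2 * q2 P1 + B ^ 2 * q2 P2 + C ^ 2 * q2 P3 +
      A * B * pair2 P1 P2 + A * C * pair2 P1 P3 + B * C * pair2 P2 P3 := by
  obtain ⟨⟨u1, u2, u3⟩, m1, m2, m3⟩ := P1
  obtain ⟨⟨v1, v2, v3⟩, n1, n2, n3⟩ := P2
  obtain ⟨⟨w1, w2, w3⟩, k1, k2, k3⟩ := P3
  simp [q2, pair2, dot3, Prod.smul_def, smul_eq_mul]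
  ring

lemma pair2_combo (P1 P2 P3 Q : V3 × V3) (A B C : ℝ) :
    pair2 (A • P1 + B • P2 + C • P3) Q =
      A * pair2 P1 Q + B * pair2 P2 Q + C * pair2 P3 Q := by
  obtain ⟨⟨u1, u2, u3⟩, m1, m2, m3⟩ := P1
  obtain ⟨⟨v1, v2, v3⟩, n1, n2, n3⟩ := P2
  obtain ⟨⟨w1, w2, w3⟩, k1, k2, k3⟩ := P3
  obtain ⟨⟨x1, x2, x3⟩, y1, y2, y3⟩ := Q
  simp [pair2, dot3, Prod.smul_def, smul_eq_mul]
  ring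

lemma finishing (p d : Fin 4 → V3) (hd : ∀ i, d i ≠ 0)
    (c0 c1 c2 : V3 × V3) (T : Set ℝ) (hT : T.Infinite)
    (hd0 : c0.1 ≠ 0)
    (hpar : ∀ i, cr c0.1 (d i) = 0 → cr c1.1 (d i) = 0 → cr c2.1 (d i) = 0 → False)
    (hq : ∀ s : ℝ, q2 (c0 + s • c1 + s ^ 2 • c2) = 0)
    (hpair : ∀ i (s : ℝ), pair2 (c0 + s • c1 + s ^ 2 • c2) (d i, cr (p i) (d i)) = 0)
    (hinj : ∀ s ∈ T, ∀ s' ∈ T, ∀ lam : ℝ,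
      c0 + s' • c1 + s' ^ 2 • c2 = lam • (c0 + s • c1 + s ^ 2 • c2) → s' = s) :
    {L : Set V3 | IsLine L ∧ ∀ i, (L ∩ lineThrough (p i) (d i)).Nonempty}.Infinite := by
  set y : ℝ → V3 × V3 := fun s => c0 + s • c1 + s ^ 2 • c2 with hy
  have hVf : ∀ s, (y s).1 = c0.1 + s • c1.1 + s ^ 2 • c2.1 := fun s => by simp [hy]
  have hB0 : {s : ℝ | (y s).1 = 0}.Finite := by
    rw [← Set.not_infinite]
    intro hinf
    have heq : {s : ℝ | (y s).1 = 0} = {s : ℝ | c0.1 + s • c1.1 + s ^ 2 • c2.1 = 0} := by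
      ext s; rw [Set.mem_setOf_eq, Set.mem_setOf_eq, hVf]
    exact hd0 (quad_vec (heq ▸ hinf)).1
  have hBi : ∀ i, {s : ℝ | cr (y s).1 (d i) = 0}.Finite := by
    intro i
    rw [← Set.not_infinite]
    intro hinf
    have heq : {s : ℝ | cr (y s).1 (d i) = 0} =
        {s : ℝ | cr c0.1 (d i) + s • cr c1.1 (d i) + s ^ 2 • cr c2.1 (d i) = 0} := by
      ext s
      rw [Set.mem_setOf_eq, Set.mem_setOf_eq, hVf, cr_add_left, cr_add_left, cr_smul_left,
        cr_smul_left]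
    obtain ⟨e0, e1, e2⟩ := quad_vec (heq ▸ hinf)
    exact hpar i e0 e1 e2
  set G : Set ℝ := T \ ({s : ℝ | (y s).1 = 0} ∪ ⋃ i, {s : ℝ | cr (y s).1 (d i) = 0}) with hG_def
  have hG : G.Infinite := hT.diff (hB0.union (Set.finite_iUnion hBi))
  set base : ℝ → V3 := fun s => (dot3 (y s).1 (y s).1)⁻¹ • cr (y s).1 (y s).2 with hbase
  set f : ℝ → Set V3 := fun s => lineThrough (base s) (y s).1 with hf
  have hVne : ∀ s ∈ G, (y s).1 ≠ 0 := by
    intro s hs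
    exact fun h => hs.2 (Set.mem_union_left _ h)
  have hcrne : ∀ s ∈ G, ∀ i, cr (y s).1 (d i) ≠ 0 := by
    intro s hs i h
    exact hs.2 (Set.mem_union_right _ (Set.mem_iUnion.mpr ⟨i, h⟩))
  have hqs : ∀ s, dot3 (y s).1 (y s).2 = 0 := fun s => hq s
  have hm : ∀ s ∈ G, cr (base s) (y s).1 = (y s).2 := by
    intro s hs
    exact recon (hVne s hs) (hqs s)
  have hmaps : ∀ s ∈ G, f s ∈
      {L : Set V3 | IsLine L ∧ ∀ i, (L ∩ lineThrough (p i) (d i)).Nonempty} := by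
    intro s hs
    refine ⟨⟨base s, (y s).1, hVne s hs, rfl⟩, fun i => ?_⟩
    refine meet_of_coplanar (hVne s hs) (hd i) (hcrne s hs i) ?_
    rw [hm s hs]
    have : ((y s).1, (y s).2) = y s := rfl
    rw [this]
    exact hpair i s
  have hinjOn : Set.InjOn f G := by
    intro s hs s' hs' heq
    obtain ⟨c, hc1, hc2⟩ := plucker_of_line_eq heq
    rw [hm s hs, hm s' hs'] at hc2
    have hyy : y s' = c • y s := by
      rw [Prod.ext_iff]
      exact ⟨hc1, hc2⟩
    exact (hinj s hs.1 s' hs'.1 c hyy).symm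
  have himg : (f '' G).Infinite := Set.Infinite.image hinjOn hG
  exact himg.mono (Set.image_subset_iff.mpr hmaps)

lemma q2_self (a u : V3) : q2 (u, cr a u) = 0 := by
  obtain ⟨a1, a2, a3⟩ := a; obtain ⟨u1, u2, u3⟩ := u
  simp [q2, dot3, cr]
  ring

lemma case0 (p d : Fin 4 → V3) (hd : ∀ i, d i ≠ 0)
    (a1 u1 a2 u2 : V3) (hu1 : u1 ≠ 0) (hu2 : u2 ≠ 0)
    (hne : lineThrough a1 u1 ≠ lineThrough a2 u2)
    (hm1 : ∀ i, (lineThrough a1 u1 ∩ lineThrough (p i) (d i)).Nonempty)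
    (hm2 : ∀ i, (lineThrough a2 u2 ∩ lineThrough (p i) (d i)).Nonempty)
    (hb : pair2 (u1, cr a1 u1) (u2, cr a2 u2) = 0) :
    {L : Set V3 | IsLine L ∧ ∀ i, (L ∩ lineThrough (p i) (d i)).Nonempty}.Infinite := by
  have hdecomp : ∀ s : ℝ, (u1, cr a1 u1) + s • (u2, cr a2 u2) + s ^ 2 • (0 : V3 × V3)
      = (1 : ℝ) • (u1, cr a1 u1) + s • (u2, cr a2 u2) + (0 : ℝ) • (0 : V3 × V3) := by
    intro s; module
  apply finishing p d hd (u1, cr a1 u1) (u2, cr a2 u2) 0 Set.univ Set.infinite_univ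
  · exact hu1
  · intro i h0 h1 _
    exact hne ((line_eq_of_parallel_meet hu1 (hd i) h0 (hm1 i)).trans
      (line_eq_of_parallel_meet hu2 (hd i) h1 (hm2 i)).symm)
  · intro s
    rw [hdecomp, q2_combo, q2_self, q2_self, hb]
    ring
  · intro i s
    have z1 := pair_zero_of_meet (hm1 i)
    have z2 := pair_zero_of_meet (hm2 i)
    rw [hdecomp, pair2_combo, z1, z2]
    ring
  · intro s _ s' _ lam h
    have h' : (1 - lam) • (u1, cr a1 u1) + (s' - lam * s) • (u2, cr a2 u2) = (0 : V3 × V3) := by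
      linear_combination (norm := module) h
    have hucomp : (1 - lam) • u1 + (s' - lam * s) • u2 = 0 := by
      have := congrArg Prod.fst h'; simpa using this
    have hmcomp : (1 - lam) • cr a1 u1 + (s' - lam * s) • cr a2 u2 = 0 := by
      have := congrArg Prod.snd h'; simpa using this
    by_cases hg : s' - lam * s = 0
    · have h1 : (1 - lam) • u1 = 0 := by rw [hg, zero_smul, add_zero] at hucomp; exact hucomp
      have hl : 1 - lam = 0 := (smul_eq_zero.mp h1).resolve_right hu1
      have : lam = 1 := by linarith
      rw [this, one_mul] at hg
      linarith
    · exfalso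
      have h1 : (s' - lam * s) • u2 = (lam - 1) • u1 := by
        linear_combination (norm := module) hucomp
      have h2 : (s' - lam * s) • cr a2 u2 = (lam - 1) • cr a1 u1 := by
        linear_combination (norm := module) hmcomp
      have hu2e : u2 = ((s' - lam * s)⁻¹ * (lam - 1)) • u1 := by
        have := congrArg (fun x => (s' - lam * s)⁻¹ • x) h1
        simpa [smul_smul, inv_mul_cancel₀ hg] using this
      have hm2e : cr a2 u2 = ((s' - lam * s)⁻¹ * (lam - 1)) • cr a1 u1 := by
        have := congrArg (fun x => (s' - lam * s)⁻¹ • x) h2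
        simpa [smul_smul, inv_mul_cancel₀ hg] using this
      exact hne (line_eq_of_plucker hu2 _ hu2e hm2e)

lemma q2_smul (c : ℝ) (x : V3 × V3) : q2 (c • x) = c ^ 2 * q2 x := by
  obtain ⟨⟨u1, u2, u3⟩, m1, m2, m3⟩ := x
  simp [q2, dot3, Prod.smul_def, smul_eq_mul]
  ring

lemma q2_combo2 (P Q : V3 × V3) (A B : ℝ) :
    q2 (A • P + B • Q) = A ^ 2 * q2 P + B ^ 2 * q2 Q + A * B * pair2 P Q := by
  obtain ⟨⟨u1, u2, u3⟩, m1, m2, m3⟩ := P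
  obtain ⟨⟨v1, v2, v3⟩, n1, n2, n3⟩ := Q
  simp [q2, pair2, dot3, Prod.smul_def, smul_eq_mul]
  ring

lemma prop_contra {a1 u1 a2 u2 : V3} (hu2 : u2 ≠ 0)
    (hne : lineThrough a1 u1 ≠ lineThrough a2 u2)
    {g e : ℝ} (hg : g ≠ 0)
    (h : g • ((u2, cr a2 u2) : V3 × V3) = e • ((u1, cr a1 u1) : V3 × V3)) : False := by
  have hu : g • u2 = e • u1 := by have := congrArg Prod.fst h; simpa using this
  have hm : g • cr a2 u2 = e • cr a1 u1 := by have := congrArg Prod.snd h; simpa using this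
  have hu2e : u2 = (g⁻¹ * e) • u1 := by
    have := congrArg (fun x => g⁻¹ • x) hu
    simpa [smul_smul, inv_mul_cancel₀ hg] using this
  have hm2e : cr a2 u2 = (g⁻¹ * e) • cr a1 u1 := by
    have := congrArg (fun x => g⁻¹ • x) hm
    simpa [smul_smul, inv_mul_cancel₀ hg] using this
  exact hne (line_eq_of_plucker hu2 _ hu2e hm2e)

lemma indep3 {a1 u1 a2 u2 a3 u3 : V3} (hu1 : u1 ≠ 0) (hu2 : u2 ≠ 0) (hu3 : u3 ≠ 0)
    (h12 : lineThrough a1 u1 ≠ lineThrough a2 u2)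
    (h13 : lineThrough a1 u1 ≠ lineThrough a3 u3)
    (h23 : lineThrough a2 u2 ≠ lineThrough a3 u3)
    (hb12 : pair2 (u1, cr a1 u1) (u2, cr a2 u2) ≠ 0)
    (al be ga : ℝ)
    (h : al • ((u1, cr a1 u1) : V3 × V3) + be • (u2, cr a2 u2) + ga • (u3, cr a3 u3) = 0) :
    al = 0 ∧ be = 0 ∧ ga = 0 := by
  by_cases hga : ga = 0
  · subst hga
    by_cases hbe : be = 0
    · subst hbe
      refine ⟨?_, rfl, rfl⟩
      have hP : al • ((u1, cr a1 u1) : V3 × V3) = 0 := by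
        linear_combination (norm := module) h
      have hu : al • u1 = 0 := by have := congrArg Prod.fst hP; simpa using this
      exact (smul_eq_zero.mp hu).resolve_right hu1
    · exfalso
      have hP : be • ((u2, cr a2 u2) : V3 × V3) = (-al) • (u1, cr a1 u1) := by
        linear_combination (norm := module) h
      exact prop_contra hu2 h12 hbe hP
  · exfalso
    have hP : ga • ((u3, cr a3 u3) : V3 × V3) = (-al) • (u1, cr a1 u1) + (-be) • (u2, cr a2 u2) := by
      linear_combination (norm := module) h
    have hq3 := congrArg q2 hP
    rw [q2_smul, q2_combo2, q2_self, q2_self, q2_self] at hq3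
    have habe : al * be = 0 := by
      rcases mul_eq_zero.mp (by linarith [hq3] : (al * be) * pair2 (u1, cr a1 u1) (u2, cr a2 u2) = 0) with h' | h'
      · exact h'
      · exact absurd h' hb12
    rcases mul_eq_zero.mp habe with hal | hbe
    · rw [hal] at hP
      by_cases hbe : be = 0
      · rw [hbe] at hP
        have hu : ga • u3 = 0 := by have := congrArg Prod.fst hP; simpa using this
        exact hu3 ((smul_eq_zero.mp hu).resolve_left hga)
      · have hP' : ga • ((u3, cr a3 u3) : V3 × V3) = (-be) • (u2, cr a2 u2) := by
          linear_combination (norm := module) hP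
        exact prop_contra hu3 h23 hga hP'
    · rw [hbe] at hP
      by_cases hal : al = 0
      · rw [hal] at hP
        have hu : ga • u3 = 0 := by have := congrArg Prod.fst hP; simpa using this
        exact hu3 ((smul_eq_zero.mp hu).resolve_left hga)
      · have hP' : ga • ((u3, cr a3 u3) : V3 × V3) = (-al) • (u1, cr a1 u1) := by
          linear_combination (norm := module) hP
        exact prop_contra hu3 h13 hga hP'

lemma case2 (p d : Fin 4 → V3) (hd : ∀ i, d i ≠ 0)
    (a1 u1 a2 u2 a3 u3 : V3) (hu1 : u1 ≠ 0) (hu2 : u2 ≠ 0) (hu3 : u3 ≠ 0)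
    (h12 : lineThrough a1 u1 ≠ lineThrough a2 u2)
    (h13 : lineThrough a1 u1 ≠ lineThrough a3 u3)
    (h23 : lineThrough a2 u2 ≠ lineThrough a3 u3)
    (hm1 : ∀ i, (lineThrough a1 u1 ∩ lineThrough (p i) (d i)).Nonempty)
    (hm2 : ∀ i, (lineThrough a2 u2 ∩ lineThrough (p i) (d i)).Nonempty)
    (hm3 : ∀ i, (lineThrough a3 u3 ∩ lineThrough (p i) (d i)).Nonempty)
    (b12 b13 b23 : ℝ)
    (e12 : pair2 (u1, cr a1 u1) (u2, cr a2 u2) = b12)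
    (e13 : pair2 (u1, cr a1 u1) (u3, cr a3 u3) = b13)
    (e23 : pair2 (u2, cr a2 u2) (u3, cr a3 u3) = b23)
    (hb12 : b12 ≠ 0) (hb13 : b13 ≠ 0) (hb23 : b23 ≠ 0) :
    {L : Set V3 | IsLine L ∧ ∀ i, (L ∩ lineThrough (p i) (d i)).Nonempty}.Infinite := by
  have hdec : ∀ s : ℝ, b13 • ((u1, cr a1 u1) : V3 × V3) +
      s • (b23 • ((u1, cr a1 u1) : V3 × V3) + b13 • (u2, cr a2 u2) + (-b12) • (u3, cr a3 u3)) +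
      s ^ 2 • (b23 • ((u2, cr a2 u2) : V3 × V3)) =
      (b13 + s * b23) • ((u1, cr a1 u1) : V3 × V3) +
      (s * (b13 + s * b23)) • (u2, cr a2 u2) + (-(s * b12)) • (u3, cr a3 u3) := by
    intro s; module
  have hT : {s : ℝ | b13 + s * b23 ≠ 0}.Infinite := by
    have hfin : {s : ℝ | b13 + s * b23 = 0}.Finite := by
      apply Set.Finite.subset (Set.finite_singleton (-b13 / b23))
      intro s hs
      rw [Set.mem_setOf_eq] at hs
      rw [Set.mem_singleton_iff]
      field_simp
      linarith
    have huniv : {s : ℝ | b13 + s * b23 ≠ 0} = Set.univ \ {s : ℝ | b13 + s * b23 = 0} := by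
      ext s; simp
    rw [huniv]
    exact Set.infinite_univ.diff hfin
  apply finishing p d hd (b13 • (u1, cr a1 u1))
    (b23 • ((u1, cr a1 u1) : V3 × V3) + b13 • (u2, cr a2 u2) + (-b12) • (u3, cr a3 u3))
    (b23 • ((u2, cr a2 u2) : V3 × V3)) {s : ℝ | b13 + s * b23 ≠ 0} hT
  · show b13 • u1 ≠ 0
    exact smul_ne_zero hb13 hu1
  · intro i h0 _ h2
    have e1 : cr u1 (d i) = 0 := by
      rw [show (b13 • ((u1, cr a1 u1) : V3 × V3)).1 = b13 • u1 from rfl, cr_smul_left] at h0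
      exact (smul_eq_zero.mp h0).resolve_left hb13
    have e2 : cr u2 (d i) = 0 := by
      rw [show (b23 • ((u2, cr a2 u2) : V3 × V3)).1 = b23 • u2 from rfl, cr_smul_left] at h2
      exact (smul_eq_zero.mp h2).resolve_left hb23
    exact h12 ((line_eq_of_parallel_meet hu1 (hd i) e1 (hm1 i)).trans
      (line_eq_of_parallel_meet hu2 (hd i) e2 (hm2 i)).symm)
  · intro s
    rw [hdec, q2_combo, q2_self, q2_self, q2_self, e12, e13, e23]
    ring
  · intro i s
    rw [hdec, pair2_combo, pair_zero_of_meet (hm1 i), pair_zero_of_meet (hm2 i),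
      pair_zero_of_meet (hm3 i)]
    ring
  · intro s hs s' hs' lam h
    rw [hdec s, hdec s'] at h
    have h' : ((b13 + s' * b23) - lam * (b13 + s * b23)) • ((u1, cr a1 u1) : V3 × V3) +
        ((s' * (b13 + s' * b23)) - lam * (s * (b13 + s * b23))) • (u2, cr a2 u2) +
        ((-(s' * b12)) - lam * (-(s * b12))) • (u3, cr a3 u3) = 0 := by
      linear_combination (norm := module) h
    obtain ⟨eA, eB, _⟩ := indep3 hu1 hu2 hu3 h12 h13 h23 (e12 ▸ hb12) _ _ _ h'
    have hA' : b13 + s' * b23 ≠ 0 := hs'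
    have hkey : (s' - s) * (b13 + s' * b23) = 0 := by linear_combination eB - s * eA
    rcases mul_eq_zero.mp hkey with h' | h'
    · linarith
    · exact absurd h' hA'

/-- if four lines in ℝ³ have at least three pairwise distinct common
transversal lines, then they have infinitely many. -/
theorem stmt_19 (l : Fin 4 → Set (ℝ × ℝ × ℝ)) (hl : ∀ i, IsLine (l i))
    (L₁ L₂ L₃ : Set (ℝ × ℝ × ℝ))
    (h12 : L₁ ≠ L₂) (h13 : L₁ ≠ L₃) (h23 : L₂ ≠ L₃)
    (h1 : IsLine L₁ ∧ ∀ i, (L₁ ∩ l i).Nonempty)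
    (h2 : IsLine L₂ ∧ ∀ i, (L₂ ∩ l i).Nonempty)
    (h3 : IsLine L₃ ∧ ∀ i, (L₃ ∩ l i).Nonempty) :
    {L : Set (ℝ × ℝ × ℝ) | IsLine L ∧ ∀ i, (L ∩ l i).Nonempty}.Infinite := by
  choose pp dd hdd hld using hl
  obtain ⟨⟨a1, u1, hu1, rfl⟩, hm1⟩ := h1
  obtain ⟨⟨a2, u2, hu2, rfl⟩, hm2⟩ := h2
  obtain ⟨⟨a3, u3, hu3, rfl⟩, hm3⟩ := h3
  simp only [hld] at hm1 hm2 hm3 ⊢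
  by_cases hb12 : pair2 (u1, cr a1 u1) (u2, cr a2 u2) = 0
  · exact case0 pp dd hdd a1 u1 a2 u2 hu1 hu2 h12 hm1 hm2 hb12
  by_cases hb13 : pair2 (u1, cr a1 u1) (u3, cr a3 u3) = 0
  · exact case0 pp dd hdd a1 u1 a3 u3 hu1 hu3 h13 hm1 hm3 hb13
  by_cases hb23 : pair2 (u2, cr a2 u2) (u3, cr a3 u3) = 0
  · exact case0 pp dd hdd a2 u2 a3 u3 hu2 hu3 h23 hm2 hm3 hb23
  · exact case2 pp dd hdd a1 u1 a2 u2 a3 u3 hu1 hu2 hu3 h12 h13 h23 hm1 hm2 hm3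
      _ _ _ rfl rfl rfl hb12 hb13 hb23
end
end
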